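/- Let L ≥ 1 and let R and R' be L×L real matrices with nonnegative entries such that T̂ (R')ᵗ ≥ T̂ Rᵗ entrywise for every t ≥ 0 (i.e., R' ⪰ R). Let e = (e_1,…,e_L)ᵀ satisfy 0 < e_1 ≤ e_2 ≤ … ≤ e_L, and assume each column of R' sums to at most 1. For i ∈ {1,…,L} define the drift Δe'(i) := e_i − Σ_{j=1}^{L} r'_{j,i} e_j, and assume ρ' := min_{1 ≤ i ≤ L} Δe'(i)/e_i > 0. Then for every entrywise nonnegative p⁰ ∈ ℝᴸ and every t ≥ 0, eᵀ Rᵗ p⁰ ≤ (1 − ρ')ᵗ · eᵀ p⁰. -/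

import Mathlib

/-!
Write `e = d ᵥ* T̂` with `d ≥ 0` the vector of consecutive differences of the nonnegative
nondecreasing `e`. Then `eᵀ Rᵗ p⁰ = dᵀ (T̂ Rᵗ) p⁰ ≤ dᵀ (T̂ R'ᵗ) p⁰ = eᵀ R'ᵗ p⁰`, so the slower
chain `R'` dominates. For `R'` the drift condition says `eᵀ R' ≤ (1 - ρ') eᵀ`, which iterates
along the nonnegative vectors `R'ˢ p⁰` to the geometric bound.
-/

open Matrix Finset

namespace Matrix

def upperOnes (α : Type*) [Zero α] [One α] (n : ℕ) : Matrix (Fin n) (Fin n) α :=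
  of fun i j => if i ≤ j then 1 else 0

variable {α : Type*}

theorem vecMul_upperOnes_apply [NonAssocSemiring α] {n : ℕ} (d : Fin n → α) (j : Fin n) :
    (d ᵥ* upperOnes α n) j = ∑ i ∈ Iic j, d i := by
  simp [vecMul, dotProduct, upperOnes, ← sum_filter, filter_ge_eq_Iic]

theorem exists_nonneg_vecMul_upperOnes_eq [Ring α] [PartialOrder α] [IsOrderedAddMonoid α]
    {n : ℕ} {e : Fin n → α} (he : 0 ≤ e) (hmono : Monotone e) :
    ∃ d, 0 ≤ d ∧ d ᵥ* upperOnes α n = e := by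
  let S : ℕ → α
    | 0 => 0
    | k + 1 => if h : k < n then e ⟨k, h⟩ else 0
  have hS : ∀ k (hk : k < n), S (k + 1) = e ⟨k, hk⟩ := fun k hk => dif_pos hk
  refine ⟨fun i => S (i + 1) - S i, fun ⟨k, hk⟩ => ?_, funext fun j => ?_⟩
  · change 0 ≤ S (k + 1) - S k
    rw [hS k hk, sub_nonneg]
    cases k with
    | zero => exact he _
    | succ k => rw [hS k (by omega)]; exact hmono (Fin.mk_le_mk.mpr k.le_succ)
  · have h := sum_map (Iic j) Fin.valEmbedding fun k => S (k + 1) - S k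
    rw [Fin.map_valEmbedding_Iic, ← Nat.range_succ_eq_Iic, sum_range_sub,
      hS j j.isLt] at h
    rw [vecMul_upperOnes_apply]
    simpa [S] using h.symm

variable [CommRing α] [PartialOrder α] [IsOrderedRing α]

theorem mulVec_nonneg {n m : Type*} [Fintype m] {A : Matrix n m α} (hA : ∀ i j, 0 ≤ A i j)
    {p : m → α} (hp : 0 ≤ p) : 0 ≤ A *ᵥ p :=
  fun i => dotProduct_nonneg_of_nonneg (hA i) hp

theorem mulVec_le_mulVec_of_nonneg {n m : Type*} [Fintype m] {A B : Matrix n m α}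
    (hAB : ∀ i j, A i j ≤ B i j) {p : m → α} (hp : 0 ≤ p) : A *ᵥ p ≤ B *ᵥ p :=
  fun i => dotProduct_le_dotProduct_of_nonneg_right (hAB i) hp

/-- First-order stochastic dominance. -/
theorem dotProduct_le_of_upperOnes_mulVec_le {n : ℕ} {e u v : Fin n → α} (he : 0 ≤ e)
    (hmono : Monotone e) (huv : upperOnes α n *ᵥ u ≤ upperOnes α n *ᵥ v) :
    e ⬝ᵥ u ≤ e ⬝ᵥ v := by
  obtain ⟨d, hd, rfl⟩ := exists_nonneg_vecMul_upperOnes_eq he hmono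
  rw [← dotProduct_mulVec, ← dotProduct_mulVec]
  exact dotProduct_le_dotProduct_of_nonneg_left huv hd

theorem dotProduct_pow_mulVec_le {n : Type*} [Fintype n] [DecidableEq n] {A : Matrix n n α}
    (hA : ∀ i j, 0 ≤ A i j) {e : n → α} {c : α} (hc : 0 ≤ c) (hdrift : e ᵥ* A ≤ c • e)
    (t : ℕ) {p : n → α} (hp : 0 ≤ p) : e ⬝ᵥ (A ^ t *ᵥ p) ≤ c ^ t * (e ⬝ᵥ p) := by
  induction t generalizing p with
  | zero => simp
  | succ t ih =>
    calc e ⬝ᵥ (A ^ (t + 1) *ᵥ p) = e ⬝ᵥ (A ^ t *ᵥ (A *ᵥ p)) := by rw [pow_succ, mulVec_mulVec]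
      _ ≤ c ^ t * ((e ᵥ* A) ⬝ᵥ p) := by
        rw [← dotProduct_mulVec]; exact ih (mulVec_nonneg hA hp)
      _ ≤ c ^ t * ((c • e) ⬝ᵥ p) := by
        gcongr; exact dotProduct_le_dotProduct_of_nonneg_right hdrift hp
      _ = c ^ (t + 1) * (e ⬝ᵥ p) := by rw [smul_dotProduct, smul_eq_mul]; ring

end Matrix

theorem stmt_13_general (L : ℕ) (hL : 1 ≤ L)
    (R R' : Matrix (Fin L) (Fin L) ℝ)
    (hR'nn : ∀ i j, 0 ≤ R' i j)
    (Th : Matrix (Fin L) (Fin L) ℝ)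
    (hTh : ∀ i j : Fin L, Th i j = if i ≤ j then 1 else 0)
    (hslow : ∀ t : ℕ, ∀ i j, (Th * R ^ t) i j ≤ (Th * R' ^ t) i j)
    (e : Fin L → ℝ) (hepos : ∀ i, 0 < e i)
    (hemono : ∀ i j : Fin L, i ≤ j → e i ≤ e j)
    (Δe' : Fin L → ℝ) (hΔ : ∀ i, Δe' i = e i - ∑ j, R' j i * e j)
    (ρ' : ℝ)
    (hρ' : ρ' = Finset.univ.inf' (Finset.univ_nonempty_iff.mpr ⟨(⟨0, hL⟩ : Fin L)⟩)
      (fun i => Δe' i / e i)) :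
    ∀ p0 : Fin L → ℝ, (∀ i, 0 ≤ p0 i) → ∀ t : ℕ,
      e ⬝ᵥ ((R ^ t) *ᵥ p0) ≤ (1 - ρ') ^ t * (e ⬝ᵥ p0) := by
  intro p0 hp0 t
  have hdrift : e ᵥ* R' ≤ (1 - ρ') • e := fun i => by
    have hρi : ρ' * e i ≤ Δe' i :=
      (le_div_iff₀ (hepos i)).mp (hρ' ▸ inf'_le _ (mem_univ i))
    have hvecMul_apply : (e ᵥ* R') i = ∑ j, R' j i * e j := by simp only [vecMul, dotProduct, mul_comm]
    rw [hvecMul_apply, Pi.smul_apply, smul_eq_mul]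
    linarith [hΔ i]
  have hc : 0 ≤ 1 - ρ' := by
    have hvec : 0 ≤ (e ᵥ* R') ⟨0, hL⟩ :=
      dotProduct_nonneg_of_nonneg (fun j => (hepos j).le) (fun j => hR'nn j ⟨0, hL⟩)
    exact (mul_nonneg_iff_of_pos_right (hepos _)).mp (hvec.trans (hdrift _))
  obtain rfl : Th = upperOnes ℝ L := Matrix.ext hTh
  calc e ⬝ᵥ (R ^ t *ᵥ p0) ≤ e ⬝ᵥ (R' ^ t *ᵥ p0) := by
        refine dotProduct_le_of_upperOnes_mulVec_le (fun i => (hepos i).le) hemono ?_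
        rw [mulVec_mulVec, mulVec_mulVec]
        exact mulVec_le_mulVec_of_nonneg (hslow t) hp0
    _ ≤ (1 - ρ') ^ t * (e ⬝ᵥ p0) := dotProduct_pow_mulVec_le hR'nn hc hdrift t hp0

/-- convergence-rate bound via a slower auxiliary matrix `R'`. -/
theorem stmt_13 (L : ℕ) (hL : 1 ≤ L)
    (R R' : Matrix (Fin L) (Fin L) ℝ)
    (hRnn : ∀ i j, 0 ≤ R i j) (hR'nn : ∀ i j, 0 ≤ R' i j)
    (Th : Matrix (Fin L) (Fin L) ℝ)
    (hTh : ∀ i j : Fin L, Th i j = if i ≤ j then 1 else 0)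
    (hslow : ∀ t : ℕ, ∀ i j, (Th * R ^ t) i j ≤ (Th * R' ^ t) i j)
    (e : Fin L → ℝ) (hepos : ∀ i, 0 < e i)
    (hemono : ∀ i j : Fin L, i ≤ j → e i ≤ e j)
    (hcol : ∀ j, ∑ i, R' i j ≤ 1)
    (Δe' : Fin L → ℝ) (hΔ : ∀ i, Δe' i = e i - ∑ j, R' j i * e j)
    (ρ' : ℝ)
    (hρ' : ρ' = Finset.univ.inf' (Finset.univ_nonempty_iff.mpr ⟨(⟨0, hL⟩ : Fin L)⟩)
      (fun i => Δe' i / e i))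
    (hρpos : 0 < ρ') :
    ∀ p0 : Fin L → ℝ, (∀ i, 0 ≤ p0 i) → ∀ t : ℕ,
      e ⬝ᵥ ((R ^ t) *ᵥ p0) ≤ (1 - ρ') ^ t * (e ⬝ᵥ p0) :=
  stmt_13_general L hL R R' hR'nn Th hTh hslow e hepos hemono Δe' hΔ ρ' hρ'
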